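/- Let φ : [0,∞) → [0,∞) be an N-function of class C¹([0,∞)) ∩ C²((0,∞)) with φ(0) = 0, φ'(0) = 0, φ' increasing and positive on (0,∞), satisfying p ≤ s·φ''(s)/φ'(s) + 1 ≤ q for all s > 0, where 1 < p ≤ q. Then there exists c = c(p,q) ≥ 1 such that for all P, Q ∈ ℝ^{N×n}: c⁻¹ · ∫₀¹ φ'(1+|τP+(1−τ)Q|)/(1+|τP+(1−τ)Q|) dτ ≤ φ'(1+|P|+|Q|)/(1+|P|+|Q|) ≤ c · ∫₀¹ φ'(1+|τP+(1−τ)Q|)/(1+|τP+(1−τ)Q|) dτ. -/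

import Mathlib

open MeasureTheory Real Set Filter
open scoped InnerProductSpace

/-- An N-function `φ` of class `C¹([0,∞)) ∩ C²((0,∞))` with (right) derivative `φ'`
and second derivative `φ''` on `(0,∞)`, satisfying `φ(0) = 0`, `φ'(0) = 0`, `φ'`
increasing and positive on `(0,∞)`, and the index condition
`p ≤ s·φ''(s)/φ'(s) + 1 ≤ q` for all `s > 0`. -/
structure IsNFun (φ φ' φ'' : ℝ → ℝ) (p q : ℝ) : Prop where
  map_zero : φ 0 = 0
  nonneg : ∀ s : ℝ, 0 ≤ s → 0 ≤ φ s
  hasDeriv : ∀ s ∈ Set.Ici (0:ℝ), HasDerivWithinAt φ (φ' s) (Set.Ici 0) s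
  derivCont : ContinuousOn φ' (Set.Ici 0)
  hasDeriv2 : ∀ s ∈ Set.Ioi (0:ℝ), HasDerivWithinAt φ' (φ'' s) (Set.Ioi 0) s
  deriv2Cont : ContinuousOn φ'' (Set.Ioi 0)
  deriv_zero : φ' 0 = 0
  deriv_mono : MonotoneOn φ' (Set.Ici 0)
  deriv_pos : ∀ s : ℝ, 0 < s → 0 < φ' s
  idx_low : ∀ s : ℝ, 0 < s → p ≤ s * φ'' s / φ' s + 1
  idx_high : ∀ s : ℝ, 0 < s → s * φ'' s / φ' s + 1 ≤ q

/-- The shifted N-function `φ_σ(s) = ∫₀^s φ'(σ+t)·t/(σ+t) dt`, expressed through the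
derivative `φ'` of `φ`. -/
noncomputable def shifted (φ' : ℝ → ℝ) (σ s : ℝ) : ℝ :=
  ∫ t in (0:ℝ)..s, φ' (σ + t) * t / (σ + t)

/-!
With `g s = φ' s / s`, the index condition makes `φ' s * s ^ (1 - p)` nondecreasing and
`φ' s * s ^ (1 - q)` nonincreasing, hence `g a ≤ (b / a) ^ (2 - p) * g b` and
`g b ≤ (b / a) ^ (q - 1) * g a` for `0 < a ≤ b`. On a quarter of the segment
`‖τ • P + (1 - τ) • Q‖ ≥ (‖P‖ + ‖Q‖) / 4`, and there the second inequality bounds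
`g (1 + ‖P‖ + ‖Q‖)` by the integrand. Conversely `‖τ • P + (1 - τ) • Q‖ ≥ ‖P - Q‖ * |τ - τ₀|`
for the parameter `τ₀` of the point of the line through `P` and `Q` closest to `0`, so the ratio
`(1 + ‖P‖ + ‖Q‖) / (1 + ‖τ • P + (1 - τ) • Q‖)` is at most `2 + |τ - τ₀|⁻¹`. By the first
inequality the integrand is at most `g (1 + ‖P‖ + ‖Q‖)` times this ratio to the power
`1 - min (p - 1) 1 < 1`, which is integrable in `τ`.
-/

theorem monotoneOn_mul_rpow_one_sub {f f' : ℝ → ℝ} {r : ℝ}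
    (hf : ∀ s, 0 < s → HasDerivAt f (f' s) s) (hr : ∀ s, 0 < s → (r - 1) * f s ≤ s * f' s) :
    MonotoneOn (fun s => f s * s ^ (1 - r)) (Ioi 0) := by
  have hderiv : ∀ s, 0 < s → HasDerivAt (fun s => f s * s ^ (1 - r))
      (s ^ (-r) * (s * f' s - (r - 1) * f s)) s := by
    intro s hs
    refine ((hf s hs).mul (hasDerivAt_rpow_const (p := 1 - r) (Or.inl hs.ne'))).congr_deriv ?_
    rw [show 1 - r - 1 = -r by ring, show 1 - r = 1 + -r by ring, rpow_add hs, rpow_one]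
    ring
  refine monotoneOn_of_hasDerivWithinAt_nonneg (convex_Ioi 0)
    (fun s hs => (hderiv s hs).continuousAt.continuousWithinAt)
    (fun s hs => (hderiv s (interior_subset hs)).hasDerivWithinAt) fun s hs => ?_
  rw [interior_Ioi] at hs
  exact mul_nonneg (rpow_nonneg hs.le _) (sub_nonneg.2 (hr s hs))

theorem intervalIntegrable_abs_rpow {r : ℝ} (hr : -1 < r) (a b : ℝ) :
    IntervalIntegrable (fun x : ℝ => |x| ^ r) volume a b := by
  have : LocallyIntegrable (fun x : ℝ => |x| ^ r) volume :=
    locallyIntegrable_of_norm_le_rpow (by simp) (α := -r) (C := 1) (by simp; linarith)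
      (Eventually.of_forall fun x => by simp [abs_rpow_of_nonneg (abs_nonneg x)])
      (continuous_abs.measurable.pow_const r).aestronglyMeasurable
  exact (this.integrableOn_isCompact isCompact_uIcc).intervalIntegrable

theorem integral_abs_rpow_le_of_nonneg {r : ℝ} (hr : -1 < r) (hr0 : r ≤ 0) {a b : ℝ}
    (ha : 0 ≤ a) (hab : a ≤ b) :
    ∫ x in a..b, |x| ^ r ≤ (b - a) ^ (r + 1) / (r + 1) := by
  have hr1 : 0 < r + 1 := by linarith
  have hcongr : EqOn (fun x : ℝ => |x| ^ r) (fun x => x ^ r) (uIcc a b) := fun x hx => by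
    rw [uIcc_of_le hab] at hx
    simp only [abs_of_nonneg (ha.trans hx.1)]
  rw [intervalIntegral.integral_congr hcongr, integral_rpow (Or.inl hr)]
  gcongr
  have := rpow_add_le_add_rpow ha (sub_nonneg.2 hab) hr1.le (by linarith)
  rw [add_sub_cancel] at this
  linarith

theorem integral_abs_rpow_le {r : ℝ} (hr : -1 < r) (hr0 : r ≤ 0) {a b : ℝ} (hab : a ≤ b) :
    ∫ x in a..b, |x| ^ r ≤ 2 * ((b - a) ^ (r + 1) / (r + 1)) := by
  have hr1 : 0 < r + 1 := by linarith
  have hbound : 0 ≤ (b - a) ^ (r + 1) / (r + 1) := by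
    have := sub_nonneg.2 hab; positivity
  have hneg : ∀ {a b : ℝ}, a ≤ b → b ≤ 0 → ∫ x in a..b, |x| ^ r ≤ (b - a) ^ (r + 1) / (r + 1) := by
    intro a b hab hb
    have := integral_abs_rpow_le_of_nonneg hr hr0 (neg_nonneg.2 hb) (neg_le_neg hab)
    rw [← intervalIntegral.integral_comp_neg] at this
    simpa [abs_neg, sub_eq_add_neg, add_comm] using this
  rcases le_total 0 a with ha | ha
  · linarith [integral_abs_rpow_le_of_nonneg hr hr0 ha hab]
  rcases le_total b 0 with hb | hb
  · linarith [hneg hab hb]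
  rw [← intervalIntegral.integral_add_adjacent_intervals (intervalIntegrable_abs_rpow hr a 0)
    (intervalIntegrable_abs_rpow hr 0 b)]
  have hleft := hneg ha le_rfl
  have hright := integral_abs_rpow_le_of_nonneg hr hr0 le_rfl hb
  have hmono : ∀ x, 0 ≤ x → x ≤ b - a → x ^ (r + 1) / (r + 1) ≤ (b - a) ^ (r + 1) / (r + 1) :=
    fun x hx hxba => by gcongr
  linarith [hmono (0 - a) (by linarith) (by linarith), hmono (b - 0) (by linarith) (by linarith)]

theorem integral_abs_sub_rpow_le {r : ℝ} (hr : -1 < r) (hr0 : r ≤ 0) (c : ℝ) {a b : ℝ}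
    (hab : a ≤ b) : ∫ x in a..b, |x - c| ^ r ≤ 2 * ((b - a) ^ (r + 1) / (r + 1)) := by
  rw [intervalIntegral.integral_comp_sub_right (fun x => |x| ^ r)]
  simpa using integral_abs_rpow_le hr hr0 (sub_le_sub_right hab c)

theorem intervalIntegrable_abs_sub_rpow {r : ℝ} (hr : -1 < r) (c a b : ℝ) :
    IntervalIntegrable (fun x : ℝ => |x - c| ^ r) volume a b := by
  simpa using (intervalIntegrable_abs_rpow hr (a - c) (b - c)).comp_sub_right c

section Segment

variable {E : Type*} [NormedAddCommGroup E]

theorem norm_smul_add_one_sub_smul_le [NormedSpace ℝ E] (P Q : E) {τ : ℝ}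
    (hτ : τ ∈ Icc (0 : ℝ) 1) : ‖τ • P + (1 - τ) • Q‖ ≤ ‖P‖ + ‖Q‖ := by
  obtain ⟨hτ0, hτ1⟩ := hτ
  calc ‖τ • P + (1 - τ) • Q‖ ≤ τ * ‖P‖ + (1 - τ) * ‖Q‖ := by
        refine (norm_add_le _ _).trans_eq ?_
        rw [norm_smul, norm_smul, norm_of_nonneg hτ0, norm_of_nonneg (sub_nonneg.2 hτ1)]
    _ ≤ ‖P‖ + ‖Q‖ := by nlinarith [norm_nonneg P, norm_nonneg Q]

theorem norm_add_norm_le_two_mul_norm_smul_add_one_sub_smul [NormedSpace ℝ E] (P Q : E) {τ : ℝ}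
    (hτ : τ ∈ Icc (0 : ℝ) 1) : ‖P‖ + ‖Q‖ ≤ 2 * ‖τ • P + (1 - τ) • Q‖ + ‖P - Q‖ := by
  obtain ⟨hτ0, hτ1⟩ := hτ
  set X := τ • P + (1 - τ) • Q
  have hP : ‖P‖ ≤ ‖X‖ + (1 - τ) * ‖P - Q‖ := by
    calc ‖P‖ = ‖X + (1 - τ) • (P - Q)‖ := by congr 1; module
      _ ≤ ‖X‖ + (1 - τ) * ‖P - Q‖ := by
        refine (norm_add_le _ _).trans_eq ?_
        rw [norm_smul, norm_of_nonneg (sub_nonneg.2 hτ1)]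
  have hQ : ‖Q‖ ≤ ‖X‖ + τ * ‖P - Q‖ := by
    calc ‖Q‖ = ‖X - τ • (P - Q)‖ := by congr 1; module
      _ ≤ ‖X‖ + τ * ‖P - Q‖ := by
        refine (norm_sub_le _ _).trans_eq ?_
        rw [norm_smul, norm_of_nonneg hτ0]
  linarith

theorem norm_add_norm_le_four_mul_norm_smul_add_one_sub_smul [NormedSpace ℝ E] {P Q : E}
    (hQP : ‖Q‖ ≤ ‖P‖) {τ : ℝ} (hτ : τ ∈ Icc (3 / 4 : ℝ) 1) :
    ‖P‖ + ‖Q‖ ≤ 4 * ‖τ • P + (1 - τ) • Q‖ := by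
  obtain ⟨hτ0, hτ1⟩ := hτ
  have : τ * ‖P‖ ≤ ‖τ • P + (1 - τ) • Q‖ + (1 - τ) * ‖Q‖ := by
    calc τ * ‖P‖ = ‖(τ • P + (1 - τ) • Q) - (1 - τ) • Q‖ := by
          rw [add_sub_cancel_right, norm_smul, norm_of_nonneg (by linarith)]
      _ ≤ _ := by
        refine (norm_sub_le _ _).trans_eq ?_
        rw [norm_smul, norm_of_nonneg (sub_nonneg.2 hτ1)]
  nlinarith [norm_nonneg Q]

theorem exists_Icc_subset_norm_smul_add_one_sub_smul_ge [NormedSpace ℝ E] (P Q : E) :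
    ∃ u ∈ Icc (0 : ℝ) (3 / 4), ∀ τ ∈ Icc u (u + 1 / 4),
      ‖P‖ + ‖Q‖ ≤ 4 * ‖τ • P + (1 - τ) • Q‖ := by
  rcases le_total ‖Q‖ ‖P‖ with hQP | hPQ
  · exact ⟨3 / 4, by norm_num, fun τ hτ =>
      norm_add_norm_le_four_mul_norm_smul_add_one_sub_smul hQP ⟨hτ.1, by linarith [hτ.2]⟩⟩
  · refine ⟨0, by norm_num, fun τ hτ => ?_⟩
    have := norm_add_norm_le_four_mul_norm_smul_add_one_sub_smul hPQ (τ := 1 - τ)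
      ⟨by linarith [hτ.2], by linarith [hτ.1]⟩
    rwa [sub_sub_cancel, add_comm (‖Q‖), add_comm ((1 - τ) • Q)] at this

theorem exists_mul_abs_sub_le_norm_smul_add_one_sub_smul [InnerProductSpace ℝ E] (P Q : E) :
    ∃ τ₀ : ℝ, ∀ τ, ‖P - Q‖ * |τ - τ₀| ≤ ‖τ • P + (1 - τ) • Q‖ := by
  rcases eq_or_ne P Q with rfl | hPQ
  · exact ⟨0, fun τ => by simp⟩
  have hd : 0 < ‖P - Q‖ := norm_pos_iff.2 (sub_ne_zero.2 hPQ)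
  -- `Q + τ₀ • (P - Q)` is the orthogonal projection of `0` onto the line through `Q` and `P`
  set τ₀ := -⟪Q, P - Q⟫_ℝ / ‖P - Q‖ ^ 2 with hτ₀
  refine ⟨τ₀, fun τ => le_of_mul_le_mul_left ?_ hd⟩
  have hinner : ⟪τ • P + (1 - τ) • Q, P - Q⟫_ℝ = ‖P - Q‖ ^ 2 * (τ - τ₀) := by
    have : τ • P + (1 - τ) • Q = Q + τ • (P - Q) := by module
    rw [this, inner_add_left, real_inner_smul_left, real_inner_self_eq_norm_sq, hτ₀]
    field_simp
    ring
  calc ‖P - Q‖ * (‖P - Q‖ * |τ - τ₀|) = |⟪τ • P + (1 - τ) • Q, P - Q⟫_ℝ| := by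
        rw [hinner, abs_mul, abs_of_nonneg (sq_nonneg ‖P - Q‖)]; ring
    _ ≤ ‖τ • P + (1 - τ) • Q‖ * ‖P - Q‖ := abs_real_inner_le_norm _ _
    _ = ‖P - Q‖ * ‖τ • P + (1 - τ) • Q‖ := mul_comm _ _

end Segment

namespace IsNFun

variable {φ φ' φ'' : ℝ → ℝ} {p q : ℝ} {E : Type*} [NormedAddCommGroup E]

theorem deriv_nonneg (h : IsNFun φ φ' φ'' p q) {s : ℝ} (hs : 0 ≤ s) : 0 ≤ φ' s := by
  rcases hs.eq_or_lt with rfl | hs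
  · exact h.deriv_zero.ge
  · exact (h.deriv_pos s hs).le

theorem hasDerivAt_deriv (h : IsNFun φ φ' φ'' p q) {s : ℝ} (hs : 0 < s) :
    HasDerivAt φ' (φ'' s) s :=
  (h.hasDeriv2 s hs).hasDerivAt (Ioi_mem_nhds hs)

theorem monotoneOn_deriv_mul_rpow (h : IsNFun φ φ' φ'' p q) :
    MonotoneOn (fun s => φ' s * s ^ (1 - p)) (Ioi 0) :=
  monotoneOn_mul_rpow_one_sub (fun _ hs => h.hasDerivAt_deriv hs) fun s hs => by
    have := h.idx_low s hs
    rw [← le_div_iff₀ (h.deriv_pos s hs)]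
    linarith

theorem antitoneOn_deriv_mul_rpow (h : IsNFun φ φ' φ'' p q) :
    AntitoneOn (fun s => φ' s * s ^ (1 - q)) (Ioi 0) := by
  have := monotoneOn_mul_rpow_one_sub (f := fun s => -φ' s) (r := q)
    (fun _ hs => (h.hasDerivAt_deriv hs).neg) fun s hs => by
      have := h.idx_high s hs
      have : s * φ'' s ≤ (q - 1) * φ' s := by
        rw [← div_le_iff₀ (h.deriv_pos s hs)]
        linarith
      linarith
  intro a ha b hb hab
  simpa using this ha hb hab

theorem deriv_div_self_le_rpow_sub_one_mul (h : IsNFun φ φ' φ'' p q) {a b : ℝ}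
    (ha : 0 < a) (hab : a ≤ b) : φ' b / b ≤ (b / a) ^ (q - 1) * (φ' a / a) := by
  have hb : 0 < b := ha.trans_le hab
  have hφb : φ' b ≤ (b / a) ^ (q - 1) * φ' a :=
    calc φ' b = φ' b * b ^ (1 - q) * b ^ (q - 1) := by
          rw [mul_assoc, ← rpow_add hb]; simp
      _ ≤ φ' a * a ^ (1 - q) * b ^ (q - 1) :=
          mul_le_mul_of_nonneg_right (h.antitoneOn_deriv_mul_rpow ha hb hab) (by positivity)
      _ = (b / a) ^ (q - 1) * φ' a := by
          rw [div_rpow hb.le ha.le, div_eq_mul_inv, ← rpow_neg ha.le, neg_sub]; ring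
  calc φ' b / b ≤ (b / a) ^ (q - 1) * φ' a / b := by gcongr
    _ ≤ (b / a) ^ (q - 1) * φ' a / a := by
        gcongr
        exact mul_nonneg (rpow_nonneg (div_nonneg hb.le ha.le) _) (h.deriv_nonneg ha.le)
    _ = _ := by ring

theorem deriv_div_self_le_rpow_two_sub_mul (h : IsNFun φ φ' φ'' p q) {a b : ℝ}
    (ha : 0 < a) (hab : a ≤ b) : φ' a / a ≤ (b / a) ^ (2 - p) * (φ' b / b) := by
  have hb : 0 < b := ha.trans_le hab
  calc φ' a / a = φ' a * a ^ (1 - p) * a ^ (p - 2) := by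
        rw [mul_assoc, ← rpow_add ha, show 1 - p + (p - 2) = -1 by ring, rpow_neg_one]; ring
    _ ≤ φ' b * b ^ (1 - p) * a ^ (p - 2) :=
        mul_le_mul_of_nonneg_right (h.monotoneOn_deriv_mul_rpow ha hb hab) (by positivity)
    _ = (b / a) ^ (2 - p) * (φ' b / b) := by
        rw [div_rpow hb.le ha.le, show 1 - p = 2 - p + -1 by ring, rpow_add hb, rpow_neg_one,
          div_eq_mul_inv _ (a ^ _), ← rpow_neg ha.le, neg_sub]
        ring

theorem continuousOn_deriv_div_self (h : IsNFun φ φ' φ'' p q) :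
    ContinuousOn (fun s => φ' s / s) (Ioi 0) :=
  (h.derivCont.mono Ioi_subset_Ici_self).div continuousOn_id fun _ hs => hs.ne'

theorem continuous_deriv_div_one_add_norm (h : IsNFun φ φ' φ'' p q) {X : Type*}
    [TopologicalSpace X] {f : X → E} (hf : Continuous f) :
    Continuous fun x => φ' (1 + ‖f x‖) / (1 + ‖f x‖) :=
  h.continuousOn_deriv_div_self.comp_continuous (by fun_prop) fun x =>
    show 0 < 1 + ‖f x‖ by positivity

theorem deriv_div_le_four_rpow_mul_integral [NormedSpace ℝ E] (h : IsNFun φ φ' φ'' p q)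
    (hq : 1 ≤ q) (P Q : E) :
    φ' (1 + ‖P‖ + ‖Q‖) / (1 + ‖P‖ + ‖Q‖) ≤ 4 ^ q * ∫ τ in (0:ℝ)..1,
      φ' (1 + ‖τ • P + (1 - τ) • Q‖) / (1 + ‖τ • P + (1 - τ) • Q‖) := by
  set G := φ' (1 + ‖P‖ + ‖Q‖) / (1 + ‖P‖ + ‖Q‖)
  set F := fun τ : ℝ => φ' (1 + ‖τ • P + (1 - τ) • Q‖) / (1 + ‖τ • P + (1 - τ) • Q‖)
  obtain ⟨u, ⟨hu0, hu1⟩, hfar⟩ := exists_Icc_subset_norm_smul_add_one_sub_smul_ge P Q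
  have hFcont : Continuous F := h.continuous_deriv_div_one_add_norm (by fun_prop)
  have hF_nonneg : ∀ τ, 0 ≤ F τ := fun τ =>
    div_nonneg (h.deriv_nonneg (by positivity)) (by positivity)
  have hpoint : ∀ τ ∈ Icc u (u + 1 / 4), G / 4 ^ (q - 1) ≤ F τ := by
    intro τ hτ
    have hXle := norm_smul_add_one_sub_smul_le P Q (τ := τ) ⟨by linarith [hτ.1], by linarith [hτ.2]⟩
    have hXge := hfar τ hτ
    have ha : 0 < 1 + ‖τ • P + (1 - τ) • Q‖ := by positivity
    rw [div_le_iff₀ (by positivity), mul_comm]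
    calc G ≤ ((1 + ‖P‖ + ‖Q‖) / (1 + ‖τ • P + (1 - τ) • Q‖)) ^ (q - 1) * F τ :=
          h.deriv_div_self_le_rpow_sub_one_mul ha (b := 1 + ‖P‖ + ‖Q‖) (by linarith)
      _ ≤ 4 ^ (q - 1) * F τ := by
          gcongr
          · exact hF_nonneg τ
          · rw [div_le_iff₀ ha]; linarith
  calc G = 4 ^ q * ((u + 1 / 4 - u) * (G / 4 ^ (q - 1))) := by
        rw [rpow_sub_one (by norm_num : (4 : ℝ) ≠ 0)]; field_simp; ring
    _ ≤ 4 ^ q * ∫ τ in u..u + 1 / 4, F τ := by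
        rw [← smul_eq_mul (u + 1 / 4 - u), ← intervalIntegral.integral_const]
        gcongr
        exact intervalIntegral.integral_mono_on (by linarith) intervalIntegrable_const
          (hFcont.intervalIntegrable _ _) hpoint
    _ ≤ 4 ^ q * ∫ τ in (0:ℝ)..1, F τ := by
        gcongr
        exact intervalIntegral.integral_mono_interval hu0 (by linarith) (by linarith)
          (ae_of_all _ hF_nonneg) (hFcont.intervalIntegrable _ _)

theorem integral_le_mul_deriv_div [InnerProductSpace ℝ E] (h : IsNFun φ φ' φ'' p q)
    (hp : 1 < p) (P Q : E) :
    ∫ τ in (0:ℝ)..1, φ' (1 + ‖τ • P + (1 - τ) • Q‖) / (1 + ‖τ • P + (1 - τ) • Q‖) ≤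
      (2 + 2 / min (p - 1) 1) * (φ' (1 + ‖P‖ + ‖Q‖) / (1 + ‖P‖ + ‖Q‖)) := by
  set G := φ' (1 + ‖P‖ + ‖Q‖) / (1 + ‖P‖ + ‖Q‖)
  set F := fun τ : ℝ => φ' (1 + ‖τ • P + (1 - τ) • Q‖) / (1 + ‖τ • P + (1 - τ) • Q‖)
  set β := min (p - 1) 1
  have hβ0 : 0 < β := lt_min (by linarith) one_pos
  have hβ1 : β ≤ 1 := min_le_right _ _
  have hG : 0 ≤ G := div_nonneg (h.deriv_nonneg (by positivity)) (by positivity)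
  obtain ⟨τ₀, hτ₀⟩ := exists_mul_abs_sub_le_norm_smul_add_one_sub_smul P Q
  have hpoint : ∀ τ ∈ Icc (0 : ℝ) 1, τ ≠ τ₀ → F τ ≤ G * (2 + |τ - τ₀| ^ (β - 1)) := by
    intro τ hτ hne
    set a := 1 + ‖τ • P + (1 - τ) • Q‖
    have ha : 0 < a := by positivity
    have hu : 0 < |τ - τ₀| := abs_pos.2 (sub_ne_zero.2 hne)
    have hab : a ≤ 1 + ‖P‖ + ‖Q‖ := by
      linarith [norm_smul_add_one_sub_smul_le P Q hτ]
    have hratio : (1 + ‖P‖ + ‖Q‖) / a ≤ 2 + |τ - τ₀|⁻¹ := by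
      have hd : ‖P - Q‖ ≤ a * |τ - τ₀|⁻¹ := by
        rw [← div_eq_mul_inv, le_div_iff₀ hu]; linarith [hτ₀ τ]
      rw [div_le_iff₀ ha]
      nlinarith [norm_add_norm_le_two_mul_norm_smul_add_one_sub_smul P Q hτ]
    have hone : 1 ≤ (1 + ‖P‖ + ‖Q‖) / a := (one_le_div ha).2 hab
    calc F τ ≤ ((1 + ‖P‖ + ‖Q‖) / a) ^ (2 - p) * G :=
          h.deriv_div_self_le_rpow_two_sub_mul ha hab
      _ ≤ ((1 + ‖P‖ + ‖Q‖) / a) ^ (1 - β) * G :=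
          mul_le_mul_of_nonneg_right
            (rpow_le_rpow_of_exponent_le hone (by linarith [min_le_left (p - 1) 1])) hG
      _ ≤ (2 + |τ - τ₀|⁻¹) ^ (1 - β) * G := by gcongr
      _ ≤ (2 ^ (1 - β) + (|τ - τ₀|⁻¹) ^ (1 - β)) * G := by
          gcongr
          exact rpow_add_le_add_rpow (by norm_num) (by positivity) (by linarith) (by linarith)
      _ ≤ G * (2 + |τ - τ₀| ^ (β - 1)) := by
          rw [inv_rpow hu.le, ← rpow_neg hu.le, neg_sub, mul_comm]
          gcongr
          exact rpow_le_self_of_one_le (by norm_num) (by linarith)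
  have hsingular := integral_abs_sub_rpow_le (r := β - 1) (by linarith) (by linarith) τ₀
    zero_le_one
  rw [sub_zero, one_rpow, sub_add_cancel, mul_one_div] at hsingular
  calc ∫ τ in (0:ℝ)..1, F τ ≤ ∫ τ in (0:ℝ)..1, G * (2 + |τ - τ₀| ^ (β - 1)) := by
        refine intervalIntegral.integral_mono_ae_restrict zero_le_one
          ((h.continuous_deriv_div_one_add_norm (by fun_prop)).intervalIntegrable _ _)
          ((intervalIntegrable_const.add
            (intervalIntegrable_abs_sub_rpow (by linarith) τ₀ 0 1)).const_mul G) ?_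
        filter_upwards [ae_restrict_mem measurableSet_Icc, ae_restrict_of_ae (volume.ae_ne τ₀)]
          with τ hτ hne using hpoint τ hτ hne
    _ = G * (2 + ∫ τ in (0:ℝ)..1, |τ - τ₀| ^ (β - 1)) := by
        rw [intervalIntegral.integral_const_mul, intervalIntegral.integral_add
          intervalIntegrable_const (intervalIntegrable_abs_sub_rpow (by linarith) τ₀ 0 1)]
        simp
    _ ≤ (2 + 2 / β) * G := by
        rw [mul_comm]
        gcongr

end IsNFun

/-- For an N-function `φ` with index condition `p ≤ s·φ''(s)/φ'(s)+1 ≤ q` (`1 < p ≤ q`),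
`φ'(1+|P|+|Q|)/(1+|P|+|Q|) ∼ ∫₀¹ φ'(1+|τP+(1−τ)Q|)/(1+|τP+(1−τ)Q|) dτ`
uniformly in `P, Q ∈ ℝ^{N×n}`, with constants depending only on `p, q`. -/
theorem segment_integral_equivalence (N n : ℕ) (p q : ℝ) (φ φ' φ'' : ℝ → ℝ)
    (hp : 1 < p) (hpq : p ≤ q) (h : IsNFun φ φ' φ'' p q) :
    ∃ c : ℝ, 1 ≤ c ∧ ∀ P Q : EuclideanSpace ℝ (Fin N × Fin n),
      c⁻¹ * (∫ τ in (0:ℝ)..1,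
          φ' (1 + ‖τ • P + (1 - τ) • Q‖) / (1 + ‖τ • P + (1 - τ) • Q‖)) ≤
        φ' (1 + ‖P‖ + ‖Q‖) / (1 + ‖P‖ + ‖Q‖) ∧
      φ' (1 + ‖P‖ + ‖Q‖) / (1 + ‖P‖ + ‖Q‖) ≤
        c * ∫ τ in (0:ℝ)..1,
          φ' (1 + ‖τ • P + (1 - τ) • Q‖) / (1 + ‖τ • P + (1 - τ) • Q‖) := by
  have hβ : 0 < min (p - 1) 1 := lt_min (by linarith) one_pos
  have h4q : 0 < (4 : ℝ) ^ q := by positivity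
  refine ⟨4 ^ q + (2 + 2 / min (p - 1) 1), by linarith [div_pos two_pos hβ], fun P Q => ?_⟩
  have hG : 0 ≤ φ' (1 + ‖P‖ + ‖Q‖) / (1 + ‖P‖ + ‖Q‖) :=
    div_nonneg (h.deriv_nonneg (by positivity)) (by positivity)
  have hI : 0 ≤ ∫ τ in (0:ℝ)..1,
      φ' (1 + ‖τ • P + (1 - τ) • Q‖) / (1 + ‖τ • P + (1 - τ) • Q‖) :=
    intervalIntegral.integral_nonneg zero_le_one fun τ _ =>
      div_nonneg (h.deriv_nonneg (by positivity)) (by positivity)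
  constructor
  · rw [inv_mul_le_iff₀ (by positivity)]
    exact (h.integral_le_mul_deriv_div hp P Q).trans
      (mul_le_mul_of_nonneg_right (le_add_of_nonneg_left h4q.le) hG)
  · exact (h.deriv_div_le_four_rpow_mul_integral (hp.le.trans hpq) P Q).trans
      (mul_le_mul_of_nonneg_right (le_add_of_nonneg_right (by positivity)) hI)
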